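/- Under a point transformation with inverse (x(x̃,ỹ), y(x̃,ỹ)), the third derivative y‴ of the original curve, expressed in terms of the transformed variables, is a rational expression of the form y‴ = [a₁ ỹ‴ + a₂ (ỹ″)² + a₃ ỹ″ (ỹ′)² + a₄ ỹ″ ỹ′ + a₅ ỹ″ + a₆ (ỹ′)⁵ + a₇ (ỹ′)⁴ + a₈ (ỹ′)³ + a₉ (ỹ′)² + a₁₀ ỹ′ + a₁₁] / (x_{1.0} + x_{0.1} ỹ′)⁵, where a₂,…,a₁₁ depend only on (x̃,ỹ) through partial derivatives of x and y of order ≤ 3, and a₁ = −(x_{1.0} + x_{0.1} ỹ′)(y_{1.0} x_{0.1} − x_{1.0} y_{0.1}) depends linearly on ỹ′. -/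

import Mathlib

/-- Partial derivative with respect to the first plane coordinate (here `x̃`). -/
noncomputable def pdx (f : ℝ × ℝ → ℝ) : ℝ × ℝ → ℝ :=
  fun p => deriv (fun s => f (s, p.2)) p.1

/-- Partial derivative with respect to the second plane coordinate (here `ỹ`). -/
noncomputable def pdy (f : ℝ × ℝ → ℝ) : ℝ × ℝ → ℝ :=
  fun p => deriv (fun s => f (p.1, s)) p.2

/-- Iterated partial derivative `Φ_{i.j} = ∂^{i+j}Φ/∂x̃^i∂ỹ^j`. -/
noncomputable def pd (f : ℝ × ℝ → ℝ) (i j : ℕ) : ℝ × ℝ → ℝ :=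
  pdx^[i] (pdy^[j] f)

/-- The 3-jet of `f` at `p`: all partial derivatives of order ≤ 3 (and `0` beyond). -/
noncomputable def jet3 (f : ℝ × ℝ → ℝ) (p : ℝ × ℝ) : ℕ → ℕ → ℝ :=
  fun i j => if i + j ≤ 3 then pd f i j p else 0

/-- Derivative of `η` regarded as a function of `ξ` along the parametrized curve
`t ↦ (ξ t, η t)`: `dη/dξ = (dη/dt)/(dξ/dt)`. -/
noncomputable def curveSlope (ξ η : ℝ → ℝ) : ℝ → ℝ :=
  fun t => deriv η t / deriv ξ t

open Filter Topology

lemma pdx_eq {f : ℝ × ℝ → ℝ} (hf : ContDiff ℝ (⊤ : ℕ∞) f) (p : ℝ × ℝ) :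
    pdx f p = fderiv ℝ f p (1, 0) := by
  have h1 : HasDerivAt (fun s : ℝ => (s, p.2)) ((1:ℝ), (0:ℝ)) p.1 :=
    (hasDerivAt_id p.1).prodMk (hasDerivAt_const p.1 p.2)
  have h2 := (hf.differentiable (by simp) p).hasFDerivAt.comp_hasDerivAt p.1 h1
  simpa [pdx, Function.comp_def] using h2.deriv

lemma pdy_eq {f : ℝ × ℝ → ℝ} (hf : ContDiff ℝ (⊤ : ℕ∞) f) (p : ℝ × ℝ) :
    pdy f p = fderiv ℝ f p (0, 1) := by
  have h1 : HasDerivAt (fun s : ℝ => (p.1, s)) ((0:ℝ), (1:ℝ)) p.2 :=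
    (hasDerivAt_const p.2 p.1).prodMk (hasDerivAt_id p.2)
  have h2 := (hf.differentiable (by simp) p).hasFDerivAt.comp_hasDerivAt p.2 h1
  simpa [pdy, Function.comp_def] using h2.deriv

lemma contDiff_pdx {f : ℝ × ℝ → ℝ} (hf : ContDiff ℝ (⊤ : ℕ∞) f) : ContDiff ℝ (⊤ : ℕ∞) (pdx f) := by
  have h : pdx f = fun p => fderiv ℝ f p (1, 0) := funext (pdx_eq hf)
  rw [h]
  exact (hf.fderiv_right (by simp)).clm_apply contDiff_const

lemma contDiff_pdy {f : ℝ × ℝ → ℝ} (hf : ContDiff ℝ (⊤ : ℕ∞) f) : ContDiff ℝ (⊤ : ℕ∞) (pdy f) := by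
  have h : pdy f = fun p => fderiv ℝ f p (0, 1) := funext (pdy_eq hf)
  rw [h]
  exact (hf.fderiv_right (by simp)).clm_apply contDiff_const

lemma fderiv_apply_const {f : ℝ × ℝ → ℝ} (hf : ContDiff ℝ (⊤ : ℕ∞) f) (v w : ℝ × ℝ) (p : ℝ × ℝ) :
    fderiv ℝ (fun q => fderiv ℝ f q v) p w = fderiv ℝ (fderiv ℝ f) p w v := by
  have hc : DifferentiableAt ℝ (fderiv ℝ f) p :=
    ((hf.fderiv_right (m := (⊤ : ℕ∞)) (by simp)).differentiable (by simp)) p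
  rw [fderiv_clm_apply hc (differentiableAt_const v)]
  simp

lemma pdx_pdy_comm {f : ℝ × ℝ → ℝ} (hf : ContDiff ℝ (⊤ : ℕ∞) f) : pdx (pdy f) = pdy (pdx f) := by
  funext p
  rw [pdx_eq (contDiff_pdy hf) p, pdy_eq (contDiff_pdx hf) p]
  have h1 : pdy f = fun q => fderiv ℝ f q (0, 1) := funext (pdy_eq hf)
  have h2 : pdx f = fun q => fderiv ℝ f q (1, 0) := funext (pdx_eq hf)
  rw [h1, h2, fderiv_apply_const hf _ _, fderiv_apply_const hf _ _]
  have hd2 : HasFDerivAt (fderiv ℝ f) (fderiv ℝ (fderiv ℝ f) p) p :=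
    (((hf.fderiv_right (m := (⊤ : ℕ∞)) (by simp)).differentiable (by simp)) p).hasFDerivAt
  exact second_derivative_symmetric (fun z => (hf.differentiable (by simp) z).hasFDerivAt) hd2 _ _

lemma contDiff_pdx_iter {f : ℝ × ℝ → ℝ} (hf : ContDiff ℝ (⊤ : ℕ∞) f) (i : ℕ) :
    ContDiff ℝ (⊤ : ℕ∞) (pdx^[i] f) := by
  induction i generalizing f with
  | zero => simpa using hf
  | succ n ih =>
    rw [Function.iterate_succ_apply]
    exact ih (contDiff_pdx hf)

lemma contDiff_pdy_iter {f : ℝ × ℝ → ℝ} (hf : ContDiff ℝ (⊤ : ℕ∞) f) (j : ℕ) :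
    ContDiff ℝ (⊤ : ℕ∞) (pdy^[j] f) := by
  induction j generalizing f with
  | zero => simpa using hf
  | succ n ih =>
    rw [Function.iterate_succ_apply]
    exact ih (contDiff_pdy hf)

lemma contDiff_pd {f : ℝ × ℝ → ℝ} (hf : ContDiff ℝ (⊤ : ℕ∞) f) (i j : ℕ) :
    ContDiff ℝ (⊤ : ℕ∞) (pd f i j) :=
  contDiff_pdx_iter (contDiff_pdy_iter hf j) i

lemma pdy_pdx_iter {f : ℝ × ℝ → ℝ} (hf : ContDiff ℝ (⊤ : ℕ∞) f) (i : ℕ) :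
    pdy (pdx^[i] f) = pdx^[i] (pdy f) := by
  induction i generalizing f with
  | zero => simp
  | succ n ih =>
    rw [Function.iterate_succ_apply, Function.iterate_succ_apply, ih (contDiff_pdx hf),
      pdx_pdy_comm hf]

lemma pdx_pd {f : ℝ × ℝ → ℝ} (i j : ℕ) : pdx (pd f i j) = pd f (i+1) j := by
  simp [pd, Function.iterate_succ_apply']

lemma pdy_pd {f : ℝ × ℝ → ℝ} (hf : ContDiff ℝ (⊤ : ℕ∞) f) (i j : ℕ) :
    pdy (pd f i j) = pd f i (j+1) := by
  rw [pd, pdy_pdx_iter (contDiff_pdy_iter hf j) i, pd, Function.iterate_succ_apply']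

lemma hasDerivAt_comp_curve {f : ℝ × ℝ → ℝ} (hf : ContDiff ℝ (⊤ : ℕ∞) f) {Y : ℝ → ℝ}
    (hY : ContDiff ℝ (⊤ : ℕ∞) Y) (s : ℝ) :
    HasDerivAt (fun u => f (u, Y u)) (pdx f (s, Y s) + pdy f (s, Y s) * deriv Y s) s := by
  have hc : HasDerivAt (fun u : ℝ => (u, Y u)) ((1:ℝ), deriv Y s) s :=
    (hasDerivAt_id s).prodMk ((hY.differentiable (by simp) s).hasDerivAt)
  have h := (hf.differentiable (by simp) (s, Y s)).hasFDerivAt.comp_hasDerivAt s hc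
  refine h.congr_deriv (Eq.symm ?_)
  rw [pdx_eq hf, pdy_eq hf]
  have hv : ((1:ℝ), deriv Y s) = ((1:ℝ), (0:ℝ)) + deriv Y s • ((0:ℝ), (1:ℝ)) := by simp
  rw [hv, map_add, map_smul]
  simp [mul_comm]

lemma hasDerivAt_pd_comp {f : ℝ × ℝ → ℝ} (hf : ContDiff ℝ (⊤ : ℕ∞) f) {Y : ℝ → ℝ}
    (hY : ContDiff ℝ (⊤ : ℕ∞) Y) (i j : ℕ) (s : ℝ) :
    HasDerivAt (fun u => pd f i j (u, Y u))
      (pd f (i+1) j (s, Y s) + pd f i (j+1) (s, Y s) * deriv Y s) s := by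
  have h := hasDerivAt_comp_curve (contDiff_pd hf i j) hY s
  rwa [pdx_pd, pdy_pd hf] at h

lemma pd_zero_zero (f : ℝ × ℝ → ℝ) : pd f 0 0 = f := rfl

noncomputable def cD1 (f : ℝ × ℝ → ℝ) (Y : ℝ → ℝ) (s : ℝ) : ℝ :=
  pd f 1 0 (s, Y s) + pd f 0 1 (s, Y s) * deriv Y s

noncomputable def cD2 (f : ℝ × ℝ → ℝ) (Y : ℝ → ℝ) (s : ℝ) : ℝ :=
  (pd f 2 0 (s, Y s) + pd f 1 1 (s, Y s) * deriv Y s)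
  + ((pd f 1 1 (s, Y s) + pd f 0 2 (s, Y s) * deriv Y s) * deriv Y s
     + pd f 0 1 (s, Y s) * deriv (deriv Y) s)

noncomputable def cD3 (f : ℝ × ℝ → ℝ) (Y : ℝ → ℝ) (s : ℝ) : ℝ :=
  ((pd f 3 0 (s, Y s) + pd f 2 1 (s, Y s) * deriv Y s)
    + ((pd f 2 1 (s, Y s) + pd f 1 2 (s, Y s) * deriv Y s) * deriv Y s
       + pd f 1 1 (s, Y s) * deriv (deriv Y) s))
  + ((((pd f 2 1 (s, Y s) + pd f 1 2 (s, Y s) * deriv Y s)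
        + ((pd f 1 2 (s, Y s) + pd f 0 3 (s, Y s) * deriv Y s) * deriv Y s
           + pd f 0 2 (s, Y s) * deriv (deriv Y) s)) * deriv Y s
      + (pd f 1 1 (s, Y s) + pd f 0 2 (s, Y s) * deriv Y s) * deriv (deriv Y) s)
     + ((pd f 1 1 (s, Y s) + pd f 0 2 (s, Y s) * deriv Y s) * deriv (deriv Y) s
        + pd f 0 1 (s, Y s) * deriv (deriv (deriv Y)) s))

section
open scoped ContDiff
variable {f : ℝ × ℝ → ℝ} {Y : ℝ → ℝ}

lemma hasDerivAt_curve (hf : ContDiff ℝ (⊤ : ℕ∞) f) (hY : ContDiff ℝ (⊤ : ℕ∞) Y) (s : ℝ) :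
    HasDerivAt (fun u => f (u, Y u)) (cD1 f Y s) s := by
  have h := hasDerivAt_pd_comp hf hY 0 0 s
  rw [pd_zero_zero] at h
  exact h

lemma deriv_curve_eq (hf : ContDiff ℝ (⊤ : ℕ∞) f) (hY : ContDiff ℝ (⊤ : ℕ∞) Y) :
    deriv (fun u => f (u, Y u)) = cD1 f Y :=
  funext fun s => (hasDerivAt_curve hf hY s).deriv

lemma hasDerivAt_deriv_Y (hY : ContDiff ℝ (⊤ : ℕ∞) Y) (s : ℝ) :
    HasDerivAt (deriv Y) (deriv (deriv Y) s) s := by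
  have h1 : ContDiff ℝ ∞ Y := hY.of_le (by simp)
  exact (((contDiff_infty_iff_deriv.mp h1).2.differentiable (by norm_num)) s).hasDerivAt

lemma hasDerivAt_deriv2_Y (hY : ContDiff ℝ (⊤ : ℕ∞) Y) (s : ℝ) :
    HasDerivAt (deriv (deriv Y)) (deriv (deriv (deriv Y)) s) s := by
  have h1 : ContDiff ℝ ∞ Y := hY.of_le (by simp)
  have h2 : ContDiff ℝ ∞ (deriv Y) := (contDiff_infty_iff_deriv.mp h1).2
  exact (((contDiff_infty_iff_deriv.mp h2).2.differentiable (by norm_num)) s).hasDerivAt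

lemma hasDerivAt_cD1 (hf : ContDiff ℝ (⊤ : ℕ∞) f) (hY : ContDiff ℝ (⊤ : ℕ∞) Y) (s : ℝ) :
    HasDerivAt (cD1 f Y) (cD2 f Y s) s :=
  (hasDerivAt_pd_comp hf hY 1 0 s).add
    ((hasDerivAt_pd_comp hf hY 0 1 s).mul (hasDerivAt_deriv_Y hY s))

lemma deriv_cD1_eq (hf : ContDiff ℝ (⊤ : ℕ∞) f) (hY : ContDiff ℝ (⊤ : ℕ∞) Y) :
    deriv (cD1 f Y) = cD2 f Y :=
  funext fun s => (hasDerivAt_cD1 hf hY s).deriv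

lemma hasDerivAt_cD2 (hf : ContDiff ℝ (⊤ : ℕ∞) f) (hY : ContDiff ℝ (⊤ : ℕ∞) Y) (s : ℝ) :
    HasDerivAt (cD2 f Y) (cD3 f Y s) s :=
  ((hasDerivAt_pd_comp hf hY 2 0 s).add
      ((hasDerivAt_pd_comp hf hY 1 1 s).mul (hasDerivAt_deriv_Y hY s))).add
    ((((hasDerivAt_pd_comp hf hY 1 1 s).add
          ((hasDerivAt_pd_comp hf hY 0 2 s).mul (hasDerivAt_deriv_Y hY s))).mul
        (hasDerivAt_deriv_Y hY s)).add
      ((hasDerivAt_pd_comp hf hY 0 1 s).mul (hasDerivAt_deriv2_Y hY s)))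

lemma continuous_cD1 (hf : ContDiff ℝ (⊤ : ℕ∞) f) (hY : ContDiff ℝ (⊤ : ℕ∞) Y) :
    Continuous (cD1 f Y) :=
  Differentiable.continuous (fun s => (hasDerivAt_cD1 hf hY s).differentiableAt)

end

noncomputable def A0 (jx jy : ℕ → ℕ → ℝ) : ℝ := (-3) * (jx 0 1) * (jy 0 1) * (jx 1 0) + 3 * (jx 0 1) * (jx 0 1) * (jy 1 0)
noncomputable def A1 (jx jy : ℕ → ℕ → ℝ) : ℝ := (-6) * (jy 0 1) * (jx 0 2) * (jx 1 0) + 3 * (jx 0 1) * (jy 0 2) * (jx 1 0) + 3 * (jx 0 1) * (jx 0 2) * (jy 1 0) + 3 * (jx 0 1) * (jy 0 1) * (jx 1 1) + (-3) * (jx 0 1) * (jx 0 1) * (jy 1 1)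
noncomputable def A2 (jx jy : ℕ → ℕ → ℝ) : ℝ := 3 * (jy 0 2) * (jx 1 0) * (jx 1 0) + (-3) * (jx 0 2) * (jx 1 0) * (jy 1 0) + (-9) * (jy 0 1) * (jx 1 0) * (jx 1 1) + 9 * (jx 0 1) * (jy 1 0) * (jx 1 1) + 3 * (jx 0 1) * (jy 0 1) * (jx 2 0) + (-3) * (jx 0 1) * (jx 0 1) * (jy 2 0)
noncomputable def A3 (jx jy : ℕ → ℕ → ℝ) : ℝ := (-3) * (jx 1 0) * (jy 1 0) * (jx 1 1) + 3 * (jx 1 0) * (jx 1 0) * (jy 1 1) + (-3) * (jy 0 1) * (jx 1 0) * (jx 2 0) + 6 * (jx 0 1) * (jy 1 0) * (jx 2 0) + (-3) * (jx 0 1) * (jx 1 0) * (jy 2 0)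
noncomputable def A4 (jx jy : ℕ → ℕ → ℝ) : ℝ := 3 * (jy 0 1) * (jx 0 2) * (jx 0 2) + (-3) * (jx 0 1) * (jx 0 2) * (jy 0 2) + (-1) * (jx 0 1) * (jy 0 1) * (jx 0 3) + (jx 0 1) * (jx 0 1) * (jy 0 3)
noncomputable def A5 (jx jy : ℕ → ℕ → ℝ) : ℝ := (-3) * (jx 0 2) * (jy 0 2) * (jx 1 0) + 3 * (jx 0 2) * (jx 0 2) * (jy 1 0) + (-1) * (jy 0 1) * (jx 0 3) * (jx 1 0) + 12 * (jy 0 1) * (jx 0 2) * (jx 1 1) + 2 * (jx 0 1) * (jy 0 3) * (jx 1 0) + (-1) * (jx 0 1) * (jx 0 3) * (jy 1 0) + (-6) * (jx 0 1) * (jy 0 2) * (jx 1 1) + (-6) * (jx 0 1) * (jx 0 2) * (jy 1 1) + (-3) * (jx 0 1) * (jy 0 1) * (jx 1 2) + 3 * (jx 0 1) * (jx 0 1) * (jy 1 2)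
noncomputable def A6 (jx jy : ℕ → ℕ → ℝ) : ℝ := (jy 0 3) * (jx 1 0) * (jx 1 0) + (-1) * (jx 0 3) * (jx 1 0) * (jy 1 0) + (-6) * (jy 0 2) * (jx 1 0) * (jx 1 1) + 12 * (jx 0 2) * (jy 1 0) * (jx 1 1) + (-6) * (jx 0 2) * (jx 1 0) * (jy 1 1) + 12 * (jy 0 1) * (jx 1 1) * (jx 1 1) + (-3) * (jy 0 1) * (jx 1 0) * (jx 1 2) + 6 * (jy 0 1) * (jx 0 2) * (jx 2 0) + (-12) * (jx 0 1) * (jx 1 1) * (jy 1 1) + (-3) * (jx 0 1) * (jy 1 0) * (jx 1 2) + 6 * (jx 0 1) * (jx 1 0) * (jy 1 2) + (-3) * (jx 0 1) * (jy 0 2) * (jx 2 0) + (-3) * (jx 0 1) * (jx 0 2) * (jy 2 0) + (-3) * (jx 0 1) * (jy 0 1) * (jx 2 1) + 3 * (jx 0 1) * (jx 0 1) * (jy 2 1)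
noncomputable def A7 (jx jy : ℕ → ℕ → ℝ) : ℝ := 12 * (jy 1 0) * (jx 1 1) * (jx 1 1) + (-12) * (jx 1 0) * (jx 1 1) * (jy 1 1) + (-3) * (jx 1 0) * (jy 1 0) * (jx 1 2) + 3 * (jx 1 0) * (jx 1 0) * (jy 1 2) + (-3) * (jy 0 2) * (jx 1 0) * (jx 2 0) + 6 * (jx 0 2) * (jy 1 0) * (jx 2 0) + (-3) * (jx 0 2) * (jx 1 0) * (jy 2 0) + 12 * (jy 0 1) * (jx 1 1) * (jx 2 0) + (-3) * (jy 0 1) * (jx 1 0) * (jx 2 1) + (-6) * (jx 0 1) * (jy 1 1) * (jx 2 0) + (-6) * (jx 0 1) * (jx 1 1) * (jy 2 0) + (-3) * (jx 0 1) * (jy 1 0) * (jx 2 1) + 6 * (jx 0 1) * (jx 1 0) * (jy 2 1) + (-1) * (jx 0 1) * (jy 0 1) * (jx 3 0) + (jx 0 1) * (jx 0 1) * (jy 3 0)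
noncomputable def A8 (jx jy : ℕ → ℕ → ℝ) : ℝ := 12 * (jy 1 0) * (jx 1 1) * (jx 2 0) + (-6) * (jx 1 0) * (jy 1 1) * (jx 2 0) + (-6) * (jx 1 0) * (jx 1 1) * (jy 2 0) + (-3) * (jx 1 0) * (jy 1 0) * (jx 2 1) + 3 * (jx 1 0) * (jx 1 0) * (jy 2 1) + 3 * (jy 0 1) * (jx 2 0) * (jx 2 0) + (-1) * (jy 0 1) * (jx 1 0) * (jx 3 0) + (-3) * (jx 0 1) * (jx 2 0) * (jy 2 0) + (-1) * (jx 0 1) * (jy 1 0) * (jx 3 0) + 2 * (jx 0 1) * (jx 1 0) * (jy 3 0)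
noncomputable def A9 (jx jy : ℕ → ℕ → ℝ) : ℝ := 3 * (jy 1 0) * (jx 2 0) * (jx 2 0) + (-3) * (jx 1 0) * (jx 2 0) * (jy 2 0) + (-1) * (jx 1 0) * (jy 1 0) * (jx 3 0) + (jx 1 0) * (jx 1 0) * (jy 3 0)

set_option maxHeartbeats 4000000 in
/-- Under a point transformation with inverse `(x(x̃,ỹ), y(x̃,ỹ))`,
the third derivative `y‴` of the original curve (computed along the transformed
curve `ỹ = Y(x̃)` via repeated `dη/dξ`), is the rational expression
`y‴ = [a₁ ỹ‴ + a₂ ỹ″² + a₃ ỹ″ ỹ′² + a₄ ỹ″ ỹ′ + a₅ ỹ″ + a₆ ỹ′⁵ + a₇ ỹ′⁴ + a₈ ỹ′³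
  + a₉ ỹ′² + a₁₀ ỹ′ + a₁₁]/(x₁₀ + x₀₁ ỹ′)⁵`, where `a₂,…,a₁₁` depend only on the
partial derivatives of `x` and `y` of order ≤ 3 at the point, and
`a₁ = −(x₁₀ + x₀₁ ỹ′)(y₁₀ x₀₁ − x₁₀ y₀₁)`. -/
theorem stmt2 :
    ∃ A : Fin 10 → ((ℕ → ℕ → ℝ) → (ℕ → ℕ → ℝ) → ℝ),
      ∀ (x y : ℝ × ℝ → ℝ) (Y : ℝ → ℝ),
        ContDiff ℝ (⊤ : ℕ∞) x → ContDiff ℝ (⊤ : ℕ∞) y → ContDiff ℝ (⊤ : ℕ∞) Y →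
        ∀ t : ℝ,
          pd y 1 0 (t, Y t) * pd x 0 1 (t, Y t)
              - pd x 1 0 (t, Y t) * pd y 0 1 (t, Y t) ≠ 0 →
          pd x 1 0 (t, Y t) + pd x 0 1 (t, Y t) * deriv Y t ≠ 0 →
          curveSlope (fun s => x (s, Y s))
              (curveSlope (fun s => x (s, Y s))
                (curveSlope (fun s => x (s, Y s)) (fun s => y (s, Y s)))) t =
            ((-((pd x 1 0 (t, Y t) + pd x 0 1 (t, Y t) * deriv Y t) *
                  (pd y 1 0 (t, Y t) * pd x 0 1 (t, Y t)
                    - pd x 1 0 (t, Y t) * pd y 0 1 (t, Y t)))) *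
                  deriv (deriv (deriv Y)) t
              + A 0 (jet3 x (t, Y t)) (jet3 y (t, Y t)) * (deriv (deriv Y) t) ^ 2
              + A 1 (jet3 x (t, Y t)) (jet3 y (t, Y t)) *
                  deriv (deriv Y) t * (deriv Y t) ^ 2
              + A 2 (jet3 x (t, Y t)) (jet3 y (t, Y t)) * deriv (deriv Y) t * deriv Y t
              + A 3 (jet3 x (t, Y t)) (jet3 y (t, Y t)) * deriv (deriv Y) t
              + A 4 (jet3 x (t, Y t)) (jet3 y (t, Y t)) * (deriv Y t) ^ 5
              + A 5 (jet3 x (t, Y t)) (jet3 y (t, Y t)) * (deriv Y t) ^ 4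
              + A 6 (jet3 x (t, Y t)) (jet3 y (t, Y t)) * (deriv Y t) ^ 3
              + A 7 (jet3 x (t, Y t)) (jet3 y (t, Y t)) * (deriv Y t) ^ 2
              + A 8 (jet3 x (t, Y t)) (jet3 y (t, Y t)) * deriv Y t
              + A 9 (jet3 x (t, Y t)) (jet3 y (t, Y t))) /
              (pd x 1 0 (t, Y t) + pd x 0 1 (t, Y t) * deriv Y t) ^ 5 := by
  refine ⟨![A0, A1, A2, A3, A4, A5, A6, A7, A8, A9], ?_⟩
  intro x y Y hx hy hY t hJ hd
  have hXd : deriv (fun s => x (s, Y s)) = cD1 x Y := deriv_curve_eq hx hY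
  have hHd : deriv (fun s => y (s, Y s)) = cD1 y Y := deriv_curve_eq hy hY
  have hd' : cD1 x Y t ≠ 0 := hd
  have hu : curveSlope (fun s => x (s, Y s)) (fun s => y (s, Y s))
      = fun s => cD1 y Y s / cD1 x Y s := by
    funext s
    simp only [curveSlope, hXd, hHd]
  have hev : ∀ᶠ s in nhds t, cD1 x Y s ≠ 0 :=
    (continuous_cD1 hx hY).continuousAt.eventually_ne hd'
  have hderu : ∀ s : ℝ, cD1 x Y s ≠ 0 →
      HasDerivAt (fun s' => cD1 y Y s' / cD1 x Y s')
        ((cD2 y Y s * cD1 x Y s - cD1 y Y s * cD2 x Y s) / (cD1 x Y s) ^ 2) s :=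
    fun s hs => (hasDerivAt_cD1 hy hY s).div (hasDerivAt_cD1 hx hY s) hs
  have hw : curveSlope (fun s => x (s, Y s))
      (curveSlope (fun s => x (s, Y s)) (fun s => y (s, Y s)))
      =ᶠ[nhds t] fun s =>
        ((cD2 y Y s * cD1 x Y s - cD1 y Y s * cD2 x Y s) / (cD1 x Y s) ^ 2)
          / cD1 x Y s := by
    filter_upwards [hev] with s hs
    simp only [curveSlope, hXd, hu]
    rw [(hderu s hs).deriv]
  have hnum : HasDerivAt (fun s => cD2 y Y s * cD1 x Y s - cD1 y Y s * cD2 x Y s)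
      ((cD3 y Y t * cD1 x Y t + cD2 y Y t * cD2 x Y t)
        - (cD2 y Y t * cD2 x Y t + cD1 y Y t * cD3 x Y t)) t :=
    ((hasDerivAt_cD2 hy hY t).mul (hasDerivAt_cD1 hx hY t)).sub
      ((hasDerivAt_cD1 hy hY t).mul (hasDerivAt_cD2 hx hY t))
  have hne2 : (cD1 x Y t) ^ 2 ≠ 0 := pow_ne_zero _ hd'
  have hpow : HasDerivAt (fun s => (cD1 x Y s) ^ 2)
      (2 * cD1 x Y t ^ 1 * cD2 x Y t) t := by
    have h := (hasDerivAt_cD1 hx hY t).pow 2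
    exact h.congr_deriv (by norm_num)
  have hV := ((hnum.div hpow hne2).div (hasDerivAt_cD1 hx hY t) hd')
  have hL : curveSlope (fun s => x (s, Y s))
      (curveSlope (fun s => x (s, Y s))
        (curveSlope (fun s => x (s, Y s)) (fun s => y (s, Y s)))) t
      = deriv (fun s =>
          ((cD2 y Y s * cD1 x Y s - cD1 y Y s * cD2 x Y s) / (cD1 x Y s) ^ 2)
            / cD1 x Y s) t / cD1 x Y t := by
    simp only [curveSlope]
    rw [hw.deriv_eq, hXd]
  rw [hL, (show HasDerivAt (fun s => ((cD2 y Y s * cD1 x Y s - cD1 y Y s * cD2 x Y s) / (cD1 x Y s) ^ 2) / cD1 x Y s) _ t from hV).deriv]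
  have hsmall : ∀ d1x d2x d3x d1y d2y d3y : ℝ, d1x ≠ 0 →
      (((d3y * d1x + d2y * d2x - (d2y * d2x + d1y * d3x)) * d1x ^ 2 -
          (d2y * d1x - d1y * d2x) * (2 * d1x ^ 1 * d2x)) / (d1x ^ 2) ^ 2 * d1x -
        (d2y * d1x - d1y * d2x) / d1x ^ 2 * d2x) / d1x ^ 2 / d1x
      = (d3y * d1x ^ 2 - 3 * d2y * d1x * d2x - d1y * d1x * d3x + 3 * d1y * d2x ^ 2)
          / d1x ^ 5 := by
    intro d1x d2x d3x d1y d2y d3y h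
    field_simp
    ring
  simp only [Pi.div_apply]
  rw [hsmall _ _ _ _ _ _ hd']
  simp only [show (![A0,A1,A2,A3,A4,A5,A6,A7,A8,A9] : Fin 10 → (ℕ → ℕ → ℝ) → (ℕ → ℕ → ℝ) → ℝ) 0 = A0 from rfl,
    show (![A0,A1,A2,A3,A4,A5,A6,A7,A8,A9] : Fin 10 → (ℕ → ℕ → ℝ) → (ℕ → ℕ → ℝ) → ℝ) 1 = A1 from rfl,
    show (![A0,A1,A2,A3,A4,A5,A6,A7,A8,A9] : Fin 10 → (ℕ → ℕ → ℝ) → (ℕ → ℕ → ℝ) → ℝ) 2 = A2 from rfl,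
    show (![A0,A1,A2,A3,A4,A5,A6,A7,A8,A9] : Fin 10 → (ℕ → ℕ → ℝ) → (ℕ → ℕ → ℝ) → ℝ) 3 = A3 from rfl,
    show (![A0,A1,A2,A3,A4,A5,A6,A7,A8,A9] : Fin 10 → (ℕ → ℕ → ℝ) → (ℕ → ℕ → ℝ) → ℝ) 4 = A4 from rfl,
    show (![A0,A1,A2,A3,A4,A5,A6,A7,A8,A9] : Fin 10 → (ℕ → ℕ → ℝ) → (ℕ → ℕ → ℝ) → ℝ) 5 = A5 from rfl,
    show (![A0,A1,A2,A3,A4,A5,A6,A7,A8,A9] : Fin 10 → (ℕ → ℕ → ℝ) → (ℕ → ℕ → ℝ) → ℝ) 6 = A6 from rfl,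
    show (![A0,A1,A2,A3,A4,A5,A6,A7,A8,A9] : Fin 10 → (ℕ → ℕ → ℝ) → (ℕ → ℕ → ℝ) → ℝ) 7 = A7 from rfl,
    show (![A0,A1,A2,A3,A4,A5,A6,A7,A8,A9] : Fin 10 → (ℕ → ℕ → ℝ) → (ℕ → ℕ → ℝ) → ℝ) 8 = A8 from rfl,
    show (![A0,A1,A2,A3,A4,A5,A6,A7,A8,A9] : Fin 10 → (ℕ → ℕ → ℝ) → (ℕ → ℕ → ℝ) → ℝ) 9 = A9 from rfl]
  simp only [A0, A1, A2, A3, A4, A5, A6, A7, A8, A9, jet3, cD1, cD2, cD3]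
  norm_num only
  simp only [if_true]
  congr 1
  ring
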